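/- arXiv:1903.04943 — 2 statements merged into one kernel-verified Lean document; each statement's English description precedes it below -/
import Mathlib

section
/- Let p ≥ 1, C > 1, and let (αᵢ)_{i=1}^p be positive reals bounded above and below by positive constants ᾱ ≥ α̲ > 0. Suppose (εᵢⱼ)_{i≠j} are nonnegative symmetric numbers and (Dᵢⱼ)_{i≠j} real numbers with Dᵢⱼ = -λᵢ∂_{λᵢ}εᵢⱼ satisfying Dᵢⱼ ≥ ((n-2)/4)·εᵢⱼ for i > j (with respect to an ordering λ₁ ≤ ... ≤ λ_p) and Dᵢⱼ + Dⱼᵢ ≥ 0 for all i ≠ j. Then for C sufficiently large (depending only on p, n, ᾱ/α̲), Σ_{i≠j} Cⁱ·(αⱼ/αᵢ)·Dᵢⱼ ≥ c·Σ_{i>j} Cⁱ·εᵢⱼ for some c > 0. -/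
open scoped BigOperators

lemma pair_sum {p : ℕ} (g : Fin p → Fin p → ℝ) :
    ∑ i : Fin p, ∑ j ∈ Finset.univ.filter (fun j => j ≠ i), g i j
      = ∑ i : Fin p, ∑ j ∈ Finset.univ.filter (fun j => j < i), (g i j + g j i) := by
  have h1 : ∑ i : Fin p, ∑ j ∈ Finset.univ.filter (fun j => j ≠ i), g i j
      = ∑ i : Fin p, (∑ j ∈ Finset.univ.filter (fun j => j < i), g i j
        + ∑ j ∈ Finset.univ.filter (fun j => i < j), g i j) := by
    refine Finset.sum_congr rfl fun i _ => ?_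
    rw [← Finset.sum_union]
    · apply Finset.sum_congr _ (fun _ _ => rfl)
      ext j
      simp only [Finset.mem_union, Finset.mem_filter, Finset.mem_univ, true_and]
      exact ne_iff_lt_or_gt (a := j) (b := i)
    · simp only [Finset.disjoint_left, Finset.mem_filter]
      rintro a ⟨-, h⟩ ⟨-, h'⟩
      exact absurd (h.trans h') (lt_irrefl a)
  rw [h1, Finset.sum_add_distrib]
  have h2 : ∑ i : Fin p, ∑ j ∈ Finset.univ.filter (fun j => i < j), g i j
      = ∑ j : Fin p, ∑ i ∈ Finset.univ.filter (fun i => i < j), g i j :=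
    Finset.sum_comm' (by simp)
  rw [h2, ← Finset.sum_add_distrib]
  exact Finset.sum_congr rfl fun i _ => Finset.sum_add_distrib.symm

theorem stmt16 (p n : ℕ) (hp : 1 ≤ p) (hn : 3 ≤ n) (αlow αhigh : ℝ)
    (h0 : 0 < αlow) (hle : αlow ≤ αhigh) :
    ∃ C₀ : ℝ, 1 < C₀ ∧ ∃ c : ℝ, 0 < c ∧
      ∀ (α : Fin p → ℝ) (ε D : Fin p → Fin p → ℝ),
        (∀ i, αlow ≤ α i ∧ α i ≤ αhigh) →
        (∀ i j, 0 ≤ ε i j) → (∀ i j, ε i j = ε j i) →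
        (∀ i j, j < i → ((n : ℝ) - 2) / 4 * ε i j ≤ D i j) →
        (∀ i j, i ≠ j → 0 ≤ D i j + D j i) →
        ∀ C : ℝ, C₀ ≤ C →
          c * (∑ i : Fin p,
                ∑ j ∈ Finset.univ.filter (fun j => j < i), C ^ (i : ℕ) * ε i j)
            ≤ ∑ i : Fin p,
                ∑ j ∈ Finset.univ.filter (fun j => j ≠ i),
                  C ^ (i : ℕ) * (α j / α i) * D i j := by
  have hh : 0 < αhigh := lt_of_lt_of_le h0 hle
  set r : ℝ := αlow / αhigh with hr
  set R : ℝ := αhigh / αlow with hR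
  have hr0 : 0 < r := div_pos h0 hh
  have hR0 : 0 < R := div_pos hh h0
  have hrR : r * R = 1 := by rw [hr, hR]; field_simp
  have hn2 : (1:ℝ) ≤ (n:ℝ) - 2 := by
    have : (3:ℝ) ≤ (n:ℝ) := by exact_mod_cast hn
    linarith
  refine ⟨max 2 (2 * R ^ 2), lt_of_lt_of_le one_lt_two (le_max_left _ _),
    r * ((n:ℝ) - 2) / 8, by nlinarith, ?_⟩
  intro α ε D hα hε hεsym hD hDsym C hC
  have hC2 : (2:ℝ) ≤ C := le_trans (le_max_left _ _) hC
  have hCR : 2 * R ^ 2 ≤ C := le_trans (le_max_right _ _) hC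
  have hC1 : (1:ℝ) ≤ C := by linarith
  have hC0 : (0:ℝ) < C := by linarith
  rw [pair_sum (fun i j => C ^ (i : ℕ) * (α j / α i) * D i j), Finset.mul_sum]
  refine Finset.sum_le_sum fun i _ => ?_
  rw [Finset.mul_sum]
  refine Finset.sum_le_sum fun j hj => ?_
  have hji : j < i := (Finset.mem_filter.mp hj).2
  -- basic facts
  have hai := hα i; have haj := hα j
  have hai0 : 0 < α i := lt_of_lt_of_le h0 hai.1
  have haj0 : 0 < α j := lt_of_lt_of_le h0 haj.1
  have hA : r ≤ α j / α i := div_le_div₀ haj0.le haj.1 hai0 hai.2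
  have hB : α i / α j ≤ R := div_le_div₀ hh.le hai.2 h0 haj.1
  have hB0 : 0 < α i / α j := div_pos hai0 haj0
  have hDij := hD i j hji
  have hε0 := hε i j
  have hDij0 : 0 ≤ D i j := le_trans (by nlinarith) hDij
  have hDji : -D i j ≤ D j i := by
    have := hDsym i j (ne_of_gt hji)
    linarith
  -- power facts
  have hCj0 : (0:ℝ) < C ^ (j : ℕ) := pow_pos hC0 _
  have hCi0 : (0:ℝ) < C ^ (i : ℕ) := pow_pos hC0 _
  have hpow : C * C ^ (j : ℕ) ≤ C ^ (i : ℕ) := by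
    calc C * C ^ (j : ℕ) = C ^ ((j : ℕ) + 1) := (pow_succ C (j:ℕ)).symm ▸ by ring
    _ ≤ C ^ (i : ℕ) := pow_le_pow_right₀ hC1 (by exact_mod_cast hji)
  -- key: C^j * R ≤ r/2 * C^i
  have hkey : C ^ (j : ℕ) * R ≤ r / 2 * C ^ (i : ℕ) := by
    have h1 : 2 * R ^ 2 * C ^ (j : ℕ) ≤ C ^ (i : ℕ) := by nlinarith
    nlinarith [mul_le_mul_of_nonneg_left h1 (le_of_lt hr0)]
  -- second term bound
  have hterm2 : -(C ^ (j : ℕ) * (α i / α j)) * D i j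
      ≤ C ^ (j : ℕ) * (α i / α j) * D j i := by
    have := mul_le_mul_of_nonneg_left hDji (mul_pos hCj0 hB0).le
    linarith
  have hbracket : r / 2 * C ^ (i : ℕ) ≤ C ^ (i : ℕ) * (α j / α i) - C ^ (j : ℕ) * (α i / α j) := by
    have h1 : C ^ (j : ℕ) * (α i / α j) ≤ C ^ (j : ℕ) * R :=
      mul_le_mul_of_nonneg_left hB hCj0.le
    have h2 : r * C ^ (i : ℕ) ≤ C ^ (i : ℕ) * (α j / α i) := by
      have := mul_le_mul_of_nonneg_left hA hCi0.le
      linarith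
    linarith
  have hfinal : r * ((n:ℝ) - 2) / 8 * (C ^ (i : ℕ) * ε i j)
      ≤ (C ^ (i : ℕ) * (α j / α i) - C ^ (j : ℕ) * (α i / α j)) * D i j := by
    have h1 : r * ((n:ℝ) - 2) / 8 * (C ^ (i : ℕ) * ε i j)
        = (r / 2 * C ^ (i : ℕ)) * (((n:ℝ) - 2) / 4 * ε i j) := by ring
    rw [h1]
    have h2 : (r / 2 * C ^ (i : ℕ)) * (((n:ℝ) - 2) / 4 * ε i j)
        ≤ (r / 2 * C ^ (i : ℕ)) * D i j :=
      mul_le_mul_of_nonneg_left hDij (by positivity)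
    have h3 : (r / 2 * C ^ (i : ℕ)) * D i j
        ≤ (C ^ (i : ℕ) * (α j / α i) - C ^ (j : ℕ) * (α i / α j)) * D i j :=
      mul_le_mul_of_nonneg_right hbracket hDij0
    linarith
  calc r * ((n:ℝ) - 2) / 8 * (C ^ (i : ℕ) * ε i j)
      ≤ (C ^ (i : ℕ) * (α j / α i) - C ^ (j : ℕ) * (α i / α j)) * D i j := hfinal
    _ = C ^ (i : ℕ) * (α j / α i) * D i j + (-(C ^ (j : ℕ) * (α i / α j)) * D i j) := by ring
    _ ≤ C ^ (i : ℕ) * (α j / α i) * D i j + C ^ (j : ℕ) * (α i / α j) * D j i := by linarith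
end

section
/- Let g ∈ L¹([0,∞)), g ≥ 0, and let ψ : [0,∞) → ℝ be defined by ψ(t) = max(2ε, h(t)) for a C¹ function h : [0,∞) → ℝ satisfying h'(t) ≤ -A(t) + C·h(t)·g(t) whenever h(t) ≥ 2ε, where A ≥ 0 and ε, C > 0. If additionally h is bounded (say h ≤ M), then ∫₀^∞ A(t)·χ_{{h(t) ≥ 2ε}}(t) dt < ∞. -/
/-!
On `S = {h ≥ 2ε}` the differential inequality and `h ≤ M` give `A ≤ C M⁺ g - h'`, so it is
enough that `∫_{S ∩ [0, b]} h'` is bounded below uniformly in `b`. This integral equals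
`ψ b - ψ 0` for `ψ = max (2ε) h`: the right derivative of `ψ` is `1_S h'` except on
`{h = 2ε, h' ≠ 0}`, a set of isolated points, hence countable and null. Thus it is at least
`2ε - ψ 0`.
-/

open MeasureTheory Set Filter Topology

section MaxConst

variable {h : ℝ → ℝ} {h' c x : ℝ}

theorem hasDerivWithinAt_Ioi_max_const_of_eq (hd : HasDerivAt h h' x) (hx : h x = c) :
    HasDerivWithinAt (fun t => max c (h t)) (max h' 0) (Ioi x) x := by
  rw [hasDerivWithinAt_iff_isLittleO]
  refine (Asymptotics.IsBigO.of_bound' ?_).trans_isLittleO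
    ((hasDerivAt_iff_isLittleO.1 hd).mono nhdsWithin_le_nhds)
  -- `max c` is 1-Lipschitz, and to the right of `x` it is linear along the tangent line
  filter_upwards [self_mem_nhdsWithin] with t (ht : x < t)
  have hlin : max (c + (t - x) * h') c = c + (t - x) * max h' 0 := by
    rw [mul_max_of_nonneg _ _ (sub_nonneg.2 ht.le), mul_zero, ← max_add_add_left, add_zero]
  rw [Real.norm_eq_abs, Real.norm_eq_abs, hx, max_self, smul_eq_mul, smul_eq_mul, max_comm c,
    sub_sub, ← hlin, sub_sub]
  exact abs_max_sub_max_le_abs _ _ _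

theorem hasDerivWithinAt_Ioi_max_const (hd : HasDerivAt h h' x) :
    HasDerivWithinAt (fun t => max c (h t))
      (if h x = c then max h' 0 else if c < h x then h' else 0) (Ioi x) x := by
  rcases lt_trichotomy (h x) c with hlt | heq | hgt
  · rw [if_neg hlt.ne, if_neg hlt.not_gt]
    have hev : (fun t => max c (h t)) =ᶠ[𝓝 x] fun _ => c := by
      filter_upwards [hd.continuousAt.eventually_lt continuousAt_const hlt] with t ht
      exact max_eq_left ht.le
    exact ((hasDerivAt_const x c).congr_of_eventuallyEq hev).hasDerivWithinAt
  · rw [if_pos heq]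
    exact hasDerivWithinAt_Ioi_max_const_of_eq hd heq
  · rw [if_neg hgt.ne', if_pos hgt]
    have hev : (fun t => max c (h t)) =ᶠ[𝓝 x] h := by
      filter_upwards [continuousAt_const.eventually_lt hd.continuousAt hgt] with t ht
      exact max_eq_right ht.le
    exact (hd.congr_of_eventuallyEq hev).hasDerivWithinAt

end MaxConst

theorem countable_setOf_eq_and_deriv_ne_zero {h : ℝ → ℝ} (hh : Differentiable ℝ h)
    (c : ℝ) : {t | h t = c ∧ deriv h t ≠ 0}.Countable := by
  set Z := {t | h t = c ∧ deriv h t ≠ 0}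
  refine (countable_setOfPred_isolated_right_within (s := Z)).mono fun x hx =>
    mem_sep hx ?_
  have hZc : Zᶜ ∈ 𝓝[≠] x := by
    filter_upwards [(hasDerivAt_iff_tendsto_slope.1 (hh x).hasDerivAt).eventually_ne hx.2]
      with t ht htZ
    exact ht (by simp [slope_def_field, htZ.1, hx.1])
  have hZ : Z ∈ 𝓝[Z ∩ Ioi x] x := mem_of_superset self_mem_nhdsWithin inter_subset_left
  have hZc' : Zᶜ ∈ 𝓝[Z ∩ Ioi x] x := nhdsWithin_mono x (fun t ht => ne_of_gt ht.2) hZc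
  exact empty_mem_iff_bot.1 (by simpa using inter_mem hZ hZc')

theorem integral_indicator_deriv_eq_max_sub {h : ℝ → ℝ} (hh : ContDiff ℝ 1 h) (c : ℝ)
    {a b : ℝ} (hab : a ≤ b) :
    ∫ t in a..b, {t | c ≤ h t}.indicator (deriv h) t = max c (h b) - max c (h a) := by
  have hd : Differentiable ℝ h := hh.differentiable one_ne_zero
  set S := {t | c ≤ h t}
  set D : ℝ → ℝ := fun t =>
    if h t = c then max (deriv h t) 0 else if c < h t then deriv h t else 0
  have hDS : ∀ᵐ t, D t = S.indicator (deriv h) t := by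
    filter_upwards [(countable_setOf_eq_and_deriv_ne_zero hd c).ae_notMem volume] with t ht
    simp only [not_and_or, not_not] at ht
    rcases lt_trichotomy (h t) c with hlt | heq | hgt
    · simp [D, S, hlt.ne, hlt.not_gt, hlt.not_ge]
    · simp [D, S, heq, ht.resolve_left (not_not.2 heq)]
    · simp [D, S, hgt.ne', hgt, hgt.le]
  have hSint : IntervalIntegrable (S.indicator (deriv h)) volume a b :=
    have hint := (hh.continuous_deriv le_rfl).intervalIntegrable (μ := volume) a b
    have hS : MeasurableSet S := (isClosed_le continuous_const hd.continuous).measurableSet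
    ⟨hint.1.indicator hS, hint.2.indicator hS⟩
  calc ∫ t in a..b, S.indicator (deriv h) t = ∫ t in a..b, D t :=
        intervalIntegral.integral_congr_ae (hDS.mono fun t ht _ => ht.symm)
    _ = max c (h b) - max c (h a) :=
        intervalIntegral.integral_eq_sub_of_hasDeriv_right_of_le hab
          (continuous_const.max hd.continuous).continuousOn
          (fun x _ => hasDerivWithinAt_Ioi_max_const (hd x).hasDerivAt)
          (hSint.congr_ae (ae_restrict_of_ae (hDS.mono fun t ht => ht.symm)))

theorem integrableOn_Ioi_of_nonneg_of_intervalIntegral_le {f : ℝ → ℝ} {a I : ℝ}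
    (hf0 : ∀ t ∈ Ioi a, 0 ≤ f t) (hfi : ∀ b, IntegrableOn f (Ioc a b))
    (hle : ∀ b, a ≤ b → ∫ t in a..b, f t ≤ I) : IntegrableOn f (Ioi a) := by
  refine integrableOn_Ioi_of_intervalIntegral_norm_bounded I a hfi tendsto_id
    ((eventually_ge_atTop a).mono fun b hb => ?_)
  calc ∫ t in a..b, ‖f t‖ = ∫ t in a..b, f t := by
        refine intervalIntegral.integral_congr_ae (ae_of_all _ fun t ht => ?_)
        rw [uIoc_of_le hb] at ht
        exact Real.norm_of_nonneg (hf0 t ht.1)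
    _ ≤ I := hle b hb

theorem integrableOn_Ioi_sub_indicator_deriv {h v : ℝ → ℝ} {a : ℝ} (c : ℝ)
    (hh : ContDiff ℝ 1 h) (hv : IntegrableOn v (Ioi a)) (hv0 : ∀ t ∈ Ioi a, 0 ≤ v t)
    (hle : ∀ t ∈ Ioi a, {t | c ≤ h t}.indicator (deriv h) t ≤ v t) :
    IntegrableOn (fun t => v t - {t | c ≤ h t}.indicator (deriv h) t) (Ioi a) := by
  set S := {t | c ≤ h t}
  have hSi : ∀ b, IntegrableOn (S.indicator (deriv h)) (Ioc a b) := fun b =>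
    (((hh.continuous_deriv le_rfl).integrableOn_Icc).mono_set Ioc_subset_Icc_self).indicator
      (isClosed_le continuous_const hh.continuous).measurableSet
  have hvi : ∀ b, IntegrableOn v (Ioc a b) := fun b => hv.mono_set Ioc_subset_Ioi_self
  refine integrableOn_Ioi_of_nonneg_of_intervalIntegral_le
    (I := max c (h a) - c + ∫ t in Ioi a, v t)
    (fun t ht => sub_nonneg.2 (hle t ht)) (fun b => (hvi b).sub (hSi b)) fun b hb => ?_
  have hvb : ∫ t in a..b, v t ≤ ∫ t in Ioi a, v t := by
    rw [intervalIntegral.integral_of_le hb]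
    exact setIntegral_mono_set hv (ae_restrict_of_forall_mem measurableSet_Ioi hv0)
      Ioc_subset_Ioi_self.eventuallyLE
  calc ∫ t in a..b, v t - S.indicator (deriv h) t
      = (∫ t in a..b, v t) - (max c (h b) - max c (h a)) := by
        rw [intervalIntegral.integral_sub
          ((intervalIntegrable_iff_integrableOn_Ioc_of_le hb).2 (hvi b))
          ((intervalIntegrable_iff_integrableOn_Ioc_of_le hb).2 (hSi b)),
          integral_indicator_deriv_eq_max_sub hh c hb]
    _ ≤ (∫ t in Ioi a, v t) - (c - max c (h a)) :=
        sub_le_sub hvb (sub_le_sub_right (le_max_left _ _) _)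
    _ = max c (h a) - c + ∫ t in Ioi a, v t := by ring

theorem setLIntegral_indicator_ofReal_lt_top {α : Type*} [MeasurableSpace α] {μ : Measure α}
    {s t : Set α} {f w : α → ℝ} (ht : MeasurableSet t) (hw : IntegrableOn w t μ)
    (hle : ∀ x ∈ t, s.indicator f x ≤ w x) :
    ∫⁻ x in t, s.indicator (fun x => ENNReal.ofReal (f x)) x ∂μ < ⊤ :=
  calc ∫⁻ x in t, s.indicator (fun x => ENNReal.ofReal (f x)) x ∂μ
      ≤ ∫⁻ x in t, ENNReal.ofReal (w x) ∂μ :=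
        setLIntegral_mono' ht fun x hx =>
          (congrFun (indicator_comp_of_zero ENNReal.ofReal_zero) x).trans_le
            (ENNReal.ofReal_le_ofReal (hle x hx))
    _ < ⊤ := hw.lintegral_lt_top

theorem stmt17_general (g h A : ℝ → ℝ) (ε C M : ℝ) (hC : 0 < C)
    (hg0 : ∀ t, 0 ≤ g t) (hgint : IntegrableOn g (Set.Ici 0))
    (hh : ContDiff ℝ 1 h) (hA0 : ∀ t, 0 ≤ A t)
    (hM : ∀ t, 0 ≤ t → h t ≤ M)
    (hineq : ∀ t, 0 ≤ t → 2 * ε ≤ h t → deriv h t ≤ -A t + C * h t * g t) :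
    ∫⁻ t in Set.Ici (0 : ℝ),
        Set.indicator {t : ℝ | 2 * ε ≤ h t} (fun t => ENNReal.ofReal (A t)) t
      < ⊤ := by
  set S := {t : ℝ | 2 * ε ≤ h t}
  set K := C * max M 0
  have hAle : ∀ t ∈ Ici (0 : ℝ), S.indicator A t ≤ K * g t - S.indicator (deriv h) t := by
    intro t (ht : 0 ≤ t)
    have hg : C * h t * g t ≤ K * g t := mul_le_mul_of_nonneg_right
      (mul_le_mul_of_nonneg_left ((hM t ht).trans (le_max_left M 0)) hC.le) (hg0 t)
    by_cases htS : t ∈ S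
    · simp only [indicator_of_mem htS]
      linarith [hineq t ht htS]
    · simp only [indicator_of_notMem htS, sub_zero]
      exact mul_nonneg (by positivity) (hg0 t)
  have hderiv_le : ∀ t ∈ Ioi (0 : ℝ), S.indicator (deriv h) t ≤ K * g t := fun t ht =>
    sub_nonneg.1 ((indicator_nonneg (fun t _ => hA0 t) t).trans (hAle t (mem_Ici_of_Ioi ht)))
  refine setLIntegral_indicator_ofReal_lt_top measurableSet_Ici
    ((integrableOn_Ici_iff_integrableOn_Ioi).2 ?_) hAle
  exact integrableOn_Ioi_sub_indicator_deriv _ hh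
    ((hgint.mono_set Ioi_subset_Ici_self).const_mul K)
    (fun t _ => mul_nonneg (by positivity) (hg0 t)) hderiv_le

theorem stmt17 (g h A : ℝ → ℝ) (ε C M : ℝ) (hε : 0 < ε) (hC : 0 < C)
    (hg0 : ∀ t, 0 ≤ g t) (hgint : IntegrableOn g (Set.Ici 0))
    (hh : ContDiff ℝ 1 h) (hA0 : ∀ t, 0 ≤ A t)
    (hM : ∀ t, 0 ≤ t → h t ≤ M)
    (hineq : ∀ t, 0 ≤ t → 2 * ε ≤ h t → deriv h t ≤ -A t + C * h t * g t) :
    ∫⁻ t in Set.Ici (0 : ℝ),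
        Set.indicator {t : ℝ | 2 * ε ≤ h t} (fun t => ENNReal.ofReal (A t)) t
      < ⊤ :=
  stmt17_general g h A ε C M hC hg0 hgint hh hA0 hM hineq
end
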